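/- Let n ≥ 4, let A = {a₁,a₂,b₁,b₂,c} and let ρ_R be the smallest congruence on the free monoid A* containing the relation set R. Then the following relations are consequences of R (i.e., the two sides are ρ_R-equivalent words): (1) a₁a₂c = c; (2) c² = (b₁a₁)^{n−3}b₁a₁³a₂; (3) b₁c = c; (4) b₂c = ca₂(b₁a₁)^{n−3}b₁a₁³a₂. -/
import Mathlib


namespace DPSPaper

instance instMonoidPFun {V : Type*} : Monoid (V →. V) where
  mul f g := g.comp f
  one := PFun.id V
  mul_assoc a b c := (PFun.comp_assoc c b a).symm
  one_mul := PFun.comp_id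
  mul_one := PFun.id_comp

/-- The geodesic distance in the star graph `S_n` on vertices `{0,1,...,n-1}`. -/
def starDist (n : ℕ) (x y : Fin n) : ℕ :=
  if x = y then 0 else if (x : ℕ) = 0 ∨ (y : ℕ) = 0 then 1 else 2

/-- Injectivity of a partial map. -/
def PInj {n : ℕ} (α : Fin n →. Fin n) : Prop :=
  ∀ ⦃x y a : Fin n⦄, a ∈ α x → a ∈ α y → x = y

/-- `α` is a partial isometry of the star graph `S_n`. -/
def IsStarPI {n : ℕ} (α : Fin n →. Fin n) : Prop :=
  PInj α ∧ ∀ ⦃x y u v : Fin n⦄, u ∈ α x → v ∈ α y → starDist n u v = starDist n x y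

/-- The set of all partial isometries of `S_n`. -/
def DPSset (n : ℕ) : Set (Fin n →. Fin n) := { α | IsStarPI α }

/-- `α₁` : fixes 0, sends `i ↦ i+1` for `1 ≤ i ≤ n-2`, and `n-1 ↦ 1`. -/
def alphaOne (n : ℕ) (hn : 3 ≤ n) : Fin n →. Fin n :=
  fun x => Part.some <|
    if (x : ℕ) = 0 then x
    else if h : (x : ℕ) = n - 1 then ⟨1, by omega⟩
    else ⟨(x : ℕ) + 1, by have := x.isLt; omega⟩

/-- `α₂` : fixes 0 and every `i ≥ 3`, swaps 1 and 2. -/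
def alphaTwo (n : ℕ) (hn : 3 ≤ n) : Fin n →. Fin n :=
  fun x => Part.some <|
    if (x : ℕ) = 1 then ⟨2, by omega⟩
    else if (x : ℕ) = 2 then ⟨1, by omega⟩
    else x

/-- `β₁` : the partial identity on `{0,1,...,n-2}`. -/
def betaOne (n : ℕ) : Fin n →. Fin n :=
  fun x => if (x : ℕ) ≤ n - 2 then Part.some x else Part.none

/-- `β₂` : the partial identity on `{1,...,n-1}`. -/
def betaTwo (n : ℕ) : Fin n →. Fin n :=
  fun x => if (x : ℕ) = 0 then Part.none else Part.some x

/-- `γ` : domain `{0,1}`, sending `0 ↦ 1` and `1 ↦ 0`. -/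
def gammaMap (n : ℕ) (hn : 3 ≤ n) : Fin n →. Fin n :=
  fun x =>
    if (x : ℕ) = 0 then Part.some ⟨1, by omega⟩
    else if (x : ℕ) = 1 then Part.some ⟨0, by omega⟩
    else Part.none

/-- The five-letter alphabet `A = {a₁, a₂, b₁, b₂, c}`. -/
inductive Gen : Type
  | a1 | a2 | b1 | b2 | c
deriving DecidableEq

abbrev W := FreeMonoid Gen

def wa1 : W := FreeMonoid.of Gen.a1
def wa2 : W := FreeMonoid.of Gen.a2
def wb1 : W := FreeMonoid.of Gen.b1
def wb2 : W := FreeMonoid.of Gen.b2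
def wc  : W := FreeMonoid.of Gen.c

/-- The set `R` of `3n+9` defining relations over the alphabet `A`. -/
def Rrel (n : ℕ) : W → W → Prop := fun u v =>
  (u = wa2 ^ 2 ∧ v = 1) ∨
  (u = wa1 ^ (n - 1) ∧ v = 1) ∨
  (u = (wa1 * wa2) ^ (n - 2) ∧ v = 1) ∨
  (u = (wa2 * wa1 ^ (n - 2) * wa2 * wa1) ^ 3 ∧ v = 1) ∨
  (∃ j, 2 ≤ j ∧ j ≤ n - 3 ∧ u = (wa2 * wa1 ^ (n - 1 - j) * wa2 * wa1 ^ j) ^ 2 ∧ v = 1) ∨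
  (u = wb1 ^ 2 ∧ v = wb1) ∨
  (u = wb2 ^ 2 ∧ v = wb2) ∨
  (u = wa2 * wb1 ∧ v = wb1 * wa2) ∨
  (u = wb2 * wa2 ∧ v = wa2 * wb2) ∨
  (u = wb2 * wa1 ∧ v = wa1 * wb2) ∨
  (u = wb2 * wb1 ∧ v = wb1 * wb2) ∨
  (u = wa1 * wa2 * wa1 ^ (n - 2) * wb1 * wa1 * wa2 * wa1 ^ (n - 2) ∧
    v = wa1 ^ (n - 2) * wb1 * wa1) ∨
  (u = (wa1 ^ (n - 2) * wb1 * wa1 * wa2) ^ 2 ∧ v = (wa2 * wa1 ^ (n - 2) * wb1 * wa1) ^ 2) ∨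
  (u = wa1 ^ (n - 2) * wb1 * wa1 * wa2 * wa1 ^ (n - 2) * wb1 * wa1 ∧
    v = (wa2 * wa1 ^ (n - 2) * wb1 * wa1) ^ 2) ∨
  (u = wc ^ 3 ∧ v = wc) ∨
  (u = wc * wa1 ∧ v = wc * wa2) ∨
  (u = wa1 ^ (n - 2) * wc ∧ v = wa2 * wc) ∨
  (∃ j, 1 ≤ j ∧ j ≤ n - 3 ∧ u = wa2 * wa1 ^ j * wc ∧ v = wa1 ^ j * wc) ∨
  (u = wb1 * wa1 * wc ∧ v = wc * wb2) ∨
  (∃ j, 2 ≤ j ∧ j ≤ n - 3 ∧ u = wb1 * wa1 ^ j * wc ∧ v = wa1 ^ j * wc) ∨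
  (u = (wb1 * wa1) ^ (n - 3) * wb1 ∧ v = wc ^ 2 * wa2 * wa1 ^ (n - 4)) ∨
  (u = wb2 * wc ^ 2 ∧ v = wc * wa2 * wc) ∨
  (u = (wb2 * wc) ^ 2 ∧ v = wb2 * wc * wb2)

/-- The images of the generators. -/
def genMap (n : ℕ) (hn : 3 ≤ n) : Gen → (Fin n →. Fin n)
  | Gen.a1 => alphaOne n hn
  | Gen.a2 => alphaTwo n hn
  | Gen.b1 => betaOne n
  | Gen.b2 => betaTwo n
  | Gen.c  => gammaMap n hn

/-- The homomorphism `φ : A* → DPS_n` extending `a₁ ↦ α₁, a₂ ↦ α₂, b₁ ↦ β₁, b₂ ↦ β₂, c ↦ γ`. -/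
def phi (n : ℕ) (hn : 3 ≤ n) : W →* (Fin n →. Fin n) :=
  FreeMonoid.lift (genMap n hn)

/-- The number of occurrences of the letter `x` in the word `w`. -/
def cnt (x : Gen) (w : W) : ℕ := (FreeMonoid.toList w).count x

theorem statement14 (n : ℕ) (hn : 4 ≤ n) :
    conGen (Rrel n) (wa1 * wa2 * wc) wc ∧
    conGen (Rrel n) (wc ^ 2) ((wb1 * wa1) ^ (n - 3) * wb1 * wa1 ^ 3 * wa2) ∧
    conGen (Rrel n) (wb1 * wc) wc ∧
    conGen (Rrel n) (wb2 * wc) (wc * wa2 * (wb1 * wa1) ^ (n - 3) * wb1 * wa1 ^ 3 * wa2) := by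
  obtain ⟨k, rfl⟩ : ∃ k, n = k + 4 := ⟨n - 4, by omega⟩
  set c := conGen (Rrel (k + 4)) with hc
  have mk : ∀ {u v : W}, Rrel (k + 4) u v → c u v := fun h => ConGen.Rel.of _ _ h
  have mulL : ∀ (w : W) {u v : W}, c u v → c (w * u) (w * v) :=
    fun w _ _ h => c.mul (c.refl w) h
  have mulR : ∀ (w : W) {u v : W}, c u v → c (u * w) (v * w) :=
    fun w _ _ h => c.mul h (c.refl w)
  have eqc : ∀ {u u' v v' : W}, u = u' → v = v' → c u' v' → c u v :=
    fun h1 h2 h => h1 ▸ h2 ▸ h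
  -- base relations
  have e1 : c (wa2 ^ 2) 1 := mk (Or.inl ⟨rfl, rfl⟩)
  have e2 : c (wa1 ^ (k + 3)) 1 := mk (Or.inr (Or.inl ⟨rfl, rfl⟩))
  have e6 : c (wb1 ^ 2) wb1 :=
    mk (Or.inr (Or.inr (Or.inr (Or.inr (Or.inr (Or.inl ⟨rfl, rfl⟩))))))
  have e15 : c (wc ^ 3) wc :=
    mk (Or.inr (Or.inr (Or.inr (Or.inr (Or.inr (Or.inr (Or.inr (Or.inr (Or.inr (Or.inr
      (Or.inr (Or.inr (Or.inr (Or.inr (Or.inl ⟨rfl, rfl⟩)))))))))))))))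
  have e17 : c (wa1 ^ (k + 2) * wc) (wa2 * wc) :=
    mk (Or.inr (Or.inr (Or.inr (Or.inr (Or.inr (Or.inr (Or.inr (Or.inr (Or.inr (Or.inr
      (Or.inr (Or.inr (Or.inr (Or.inr (Or.inr (Or.inr (Or.inl ⟨rfl, rfl⟩)))))))))))))))))
  have e21 : c ((wb1 * wa1) ^ (k + 1) * wb1) (wc ^ 2 * wa2 * wa1 ^ k) :=
    mk (Or.inr (Or.inr (Or.inr (Or.inr (Or.inr (Or.inr (Or.inr (Or.inr (Or.inr (Or.inr
      (Or.inr (Or.inr (Or.inr (Or.inr (Or.inr (Or.inr (Or.inr (Or.inr (Or.inr (Or.inr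
      (Or.inl ⟨rfl, rfl⟩)))))))))))))))))))))
  have e22 : c (wb2 * wc ^ 2) (wc * wa2 * wc) :=
    mk (Or.inr (Or.inr (Or.inr (Or.inr (Or.inr (Or.inr (Or.inr (Or.inr (Or.inr (Or.inr
      (Or.inr (Or.inr (Or.inr (Or.inr (Or.inr (Or.inr (Or.inr (Or.inr (Or.inr (Or.inr
      (Or.inr (Or.inl ⟨rfl, rfl⟩))))))))))))))))))))))
  -- Part (1): a1 a2 c = c
  have p1 : c (wa1 * wa2 * wc) wc := by
    refine (eqc (mul_assoc _ _ _) rfl (mulL wa1 (c.symm e17))).trans ?_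
    -- c (wa1 * (wa1^(k+2) * wc)) wc
    refine (eqc ?_ rfl (mulR wc e2)).trans (eqc (one_mul wc).symm rfl (c.refl wc))
    rw [← mul_assoc, ← pow_succ']
  -- Part (2): c^2 = (b1 a1)^(k+1) b1 a1^3 a2
  have p2 : c (wc ^ 2) ((wb1 * wa1) ^ (k + 1) * wb1 * wa1 ^ 3 * wa2) := by
    refine c.symm ?_
    refine (mulR wa2 (mulR (wa1 ^ 3) e21)).trans ?_
    -- c (wc^2 * wa2 * wa1^k * wa1^3 * wa2) (wc^2)
    have h1 : wc ^ 2 * wa2 * wa1 ^ k * wa1 ^ 3 * wa2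
        = wc ^ 2 * wa2 * wa1 ^ (k + 3) * wa2 := by
      rw [pow_add, ← mul_assoc]
    refine (eqc h1 rfl (c.refl _)).trans ?_
    refine (eqc (mul_assoc _ _ _) rfl
      (mulL (wc ^ 2 * wa2) (mulR wa2 e2))).trans ?_
    -- c (wc^2 * wa2 * (1 * wa2)) (wc^2)
    have h2 : wc ^ 2 * wa2 * (1 * wa2) = wc ^ 2 * wa2 ^ 2 := by
      rw [one_mul, mul_assoc, ← pow_two]
    refine (eqc h2 rfl (mulL (wc ^ 2) e1)).trans ?_
    exact eqc (mul_one _) rfl (c.refl _)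
  -- b1 * (b1 a1)^(k+1) = (b1 a1)^(k+1)
  have h3a : c (wb1 * (wb1 * wa1) ^ (k + 1)) ((wb1 * wa1) ^ (k + 1)) := by
    have h1 : wb1 * (wb1 * wa1) ^ (k + 1)
        = wb1 ^ 2 * (wa1 * (wb1 * wa1) ^ k) := by
      rw [pow_succ', pow_two]
      simp [mul_assoc]
    have h2 : wb1 * (wa1 * (wb1 * wa1) ^ k) = (wb1 * wa1) ^ (k + 1) := by
      rw [pow_succ', mul_assoc]
    exact eqc h1 h2.symm (mulR (wa1 * (wb1 * wa1) ^ k) e6)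
  -- b1 * c^2 = c^2
  have h3b : c (wb1 * wc ^ 2) (wc ^ 2) := by
    refine (mulL wb1 p2).trans ?_
    have h1 : wb1 * ((wb1 * wa1) ^ (k + 1) * wb1 * wa1 ^ 3 * wa2)
        = wb1 * (wb1 * wa1) ^ (k + 1) * wb1 * wa1 ^ 3 * wa2 := by
      simp [mul_assoc]
    refine (eqc h1 rfl (mulR wa2 (mulR (wa1 ^ 3) (mulR wb1 h3a)))).trans (c.symm p2)
  -- Part (3): b1 c = c
  have p3 : c (wb1 * wc) wc := by
    refine (mulL wb1 (c.symm e15)).trans ?_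
    have h1 : wb1 * wc ^ 3 = wb1 * wc ^ 2 * wc := by
      rw [pow_succ, ← mul_assoc]
    refine (eqc h1 rfl (mulR wc h3b)).trans ?_
    exact eqc (pow_succ wc 2).symm rfl e15
  -- Part (4): b2 c = c a2 (b1 a1)^(k+1) b1 a1^3 a2
  have p4 : c (wb2 * wc) (wc * wa2 * (wb1 * wa1) ^ (k + 1) * wb1 * wa1 ^ 3 * wa2) := by
    refine (mulL wb2 (c.symm e15)).trans ?_
    have h1 : wb2 * wc ^ 3 = wb2 * wc ^ 2 * wc := by
      rw [pow_succ, ← mul_assoc]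
    refine (eqc h1 rfl (mulR wc e22)).trans ?_
    have h2 : wc * wa2 * wc * wc = wc * wa2 * wc ^ 2 := by
      rw [pow_two, ← mul_assoc]
    refine (eqc h2 rfl (mulL (wc * wa2) p2)).trans ?_
    refine eqc ?_ rfl (c.refl _)
    simp [mul_assoc]
  exact ⟨p1, p2, p3, p4⟩


end DPSPaper
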